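/- For any sign vector (ε₁,…,εₙ) ∈ {1,−1}ⁿ and any element x of the real Cayley–Dickson algebra 𝔸ₙ, there exist r, s ∈ ℝ such that x·x = r·1 + s·x; consequently (x·x)·x = x·(x·x) for every x ∈ 𝔸ₙ. -/

import Mathlib

noncomputable section

/-- The real Cayley–Dickson algebra carrier: `CD 0 = ℝ`, `CD (n+1) = CD n × CD n`. -/
def CD : ℕ → Type
  | 0 => ℝ
  | n + 1 => CD n × CD n

instance CD.instAddCommGroup : (n : ℕ) → AddCommGroup (CD n)
  | 0 => inferInstanceAs (AddCommGroup ℝ)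
  | n + 1 =>
    letI := CD.instAddCommGroup n
    inferInstanceAs (AddCommGroup (CD n × CD n))

instance CD.instModule : (n : ℕ) → Module ℝ (CD n)
  | 0 => inferInstanceAs (Module ℝ ℝ)
  | n + 1 =>
    letI := CD.instModule n
    inferInstanceAs (Module ℝ (CD n × CD n))

/-- The unit of the Cayley–Dickson algebra. -/
def CD.one : (n : ℕ) → CD n
  | 0 => (1 : ℝ)
  | n + 1 => (CD.one n, 0)

/-- Conjugation: `(a, b)* = (a*, -b)`, identity on `ℝ`. -/
def CD.conj : (n : ℕ) → CD n → CD n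
  | 0, a => a
  | n + 1, x => (CD.conj n x.1, -x.2)

/-- Cayley–Dickson multiplication with sign vector `ε`:
`(a,b)·(c,d) = (a·c − ε (n+1) • (d*·b), d·a + b·c*)`. -/
def CD.mul (ε : ℕ → ℝ) : (n : ℕ) → CD n → CD n → CD n
  | 0, a, c => (show ℝ from a) * (show ℝ from c)
  | n + 1, x, y =>
    (CD.mul ε n x.1 y.1 - ε (n + 1) • CD.mul ε n (CD.conj n y.2) x.2,
     CD.mul ε n y.2 x.1 + CD.mul ε n x.2 (CD.conj n y.1))

/-- The standard basis element `e α` of `CD n`, for `α ⊆ {1,…,n}`. -/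
def CD.basis : (n : ℕ) → Finset ℕ → CD n
  | 0, _ => (1 : ℝ)
  | n + 1, α =>
    if n + 1 ∈ α then ((0 : CD n), CD.basis n (α.erase (n + 1)))
    else (CD.basis n α, (0 : CD n))

/-- `α` indexes a pure basis element of `CD n`. -/
def CD.IsPure (n : ℕ) (α : Finset ℕ) : Prop :=
  α.Nonempty ∧ α ⊆ Finset.Icc 1 n

/-- The associator `[x,y,z] = (x·y)·z − x·(y·z)`. -/
def CD.assoc (ε : ℕ → ℝ) (n : ℕ) (x y z : CD n) : CD n :=
  CD.mul ε n (CD.mul ε n x y) z - CD.mul ε n x (CD.mul ε n y z)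

/-- A triad: indices of three pairwise distinct pure basis elements `b, c, d`
with `d ≠ ±(b·c)` (all signs `εᵢ = 1`). -/
def CD.IsTriad (n : ℕ) (α β γ : Finset ℕ) : Prop :=
  CD.IsPure n α ∧ CD.IsPure n β ∧ CD.IsPure n γ ∧
  α ≠ β ∧ α ≠ γ ∧ β ≠ γ ∧
  CD.basis n γ ≠ CD.mul (fun _ => 1) n (CD.basis n α) (CD.basis n β) ∧
  CD.basis n γ ≠ -CD.mul (fun _ => 1) n (CD.basis n α) (CD.basis n β)

/-- Multiplication with all signs `εᵢ = 1`. -/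
abbrev CD.mul1 (n : ℕ) : CD n → CD n → CD n := CD.mul (fun _ => 1) n

/-- Associator with all signs `εᵢ = 1`. -/
abbrev CD.assoc1 (n : ℕ) : CD n → CD n → CD n → CD n := CD.assoc (fun _ => 1) n

/-!
Every `x` satisfies `x + x* = t • 1` and `x* · x = N • 1` for real `t` (twice the real part) and
`N` (the norm form), both by induction on `n` using only the bilinearity of the product.
Substituting `x* = t • 1 - x` into the second identity gives `x · x = t • x - N • 1`, so `x · x`
lies in the span of `1` and `x`, and both `(x · x) · x` and `x · (x · x)` equal `t • (x · x) - N • x`.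
-/

namespace CD

variable (ε : ℕ → ℝ)

def re : (n : ℕ) → CD n → ℝ
  | 0, x => show ℝ from x
  | n + 1, x => re n x.1

/-- Not a sum of squares in general: a sign `ε i = -1` makes it indefinite. -/
def normSq : (n : ℕ) → CD n → ℝ
  | 0, x => (show ℝ from x) * (show ℝ from x)
  | n + 1, x => normSq n x.1 + ε (n + 1) * normSq n x.2

section Components

variable {n : ℕ} (x y : CD (n + 1))

@[simp] theorem fst_add : (x + y).1 = x.1 + y.1 := rfl
@[simp] theorem snd_add : (x + y).2 = x.2 + y.2 := rfl
@[simp] theorem fst_smul (c : ℝ) : (c • x).1 = c • x.1 := rfl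
@[simp] theorem snd_smul (c : ℝ) : (c • x).2 = c • x.2 := rfl
@[simp] theorem fst_one : (one (n + 1)).1 = one n := rfl
@[simp] theorem snd_one : (one (n + 1)).2 = 0 := rfl
@[simp] theorem fst_conj : (conj (n + 1) x).1 = conj n x.1 := rfl
@[simp] theorem snd_conj : (conj (n + 1) x).2 = -x.2 := rfl

@[simp] theorem fst_mul :
    (mul ε (n + 1) x y).1 = mul ε n x.1 y.1 - ε (n + 1) • mul ε n (conj n y.2) x.2 := rfl

@[simp] theorem snd_mul : (mul ε (n + 1) x y).2 = mul ε n y.2 x.1 + mul ε n x.2 (conj n y.1) :=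
  rfl

end Components

variable (n : ℕ)

theorem isLinearMap_conj : IsLinearMap ℝ (conj n) := by
  induction n with
  | zero => exact ⟨fun _ _ => rfl, fun _ _ => rfl⟩
  | succ n ih =>
    constructor
    · intro x y
      exact Prod.ext (ih.map_add x.1 y.1) (neg_add x.2 y.2)
    · intro c x
      exact Prod.ext (ih.map_smul c x.1) (smul_neg c x.2).symm

theorem conj_zero : conj n 0 = 0 := (isLinearMap_conj n).map_zero

theorem conj_one : conj n (one n) = one n := by
  induction n with
  | zero => rfl
  | succ n ih => exact Prod.ext ih neg_zero

theorem isBilinearMap_mul : IsBilinearMap ℝ (mul ε n) := by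
  induction n with
  | zero =>
    exact ⟨fun x y z => add_mul (show ℝ from x) y z, fun c x y => mul_assoc c (show ℝ from x) y,
      fun x y z => mul_add (show ℝ from x) y z, fun c x y => mul_left_comm (show ℝ from x) c y⟩
  | succ n ih =>
    have hc := isLinearMap_conj n
    constructor <;> intros <;> refine Prod.ext ?_ ?_ <;>
      simp only [fst_mul, snd_mul, fst_add, snd_add, fst_smul, snd_smul, ih.add_left,
        ih.add_right, ih.smul_left, ih.smul_right, hc.map_add, hc.map_smul] <;>
      module

section Bilinear

variable (x y z : CD n) (c : ℝ)

theorem add_mul : mul ε n (x + y) z = mul ε n x z + mul ε n y z :=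
  (isBilinearMap_mul ε n).add_left x y z

theorem mul_add : mul ε n x (y + z) = mul ε n x y + mul ε n x z :=
  (isBilinearMap_mul ε n).add_right x y z

theorem smul_mul : mul ε n (c • x) y = c • mul ε n x y := (isBilinearMap_mul ε n).smul_left c x y

theorem mul_smul : mul ε n x (c • y) = c • mul ε n x y := (isBilinearMap_mul ε n).smul_right c x y

theorem zero_mul : mul ε n 0 x = 0 := LinearMap.map_zero₂ (isBilinearMap_mul ε n).toLinearMap x

theorem mul_zero : mul ε n x 0 = 0 := map_zero ((isBilinearMap_mul ε n).toLinearMap x)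

theorem neg_mul : mul ε n (-x) y = -mul ε n x y :=
  LinearMap.map_neg₂ (isBilinearMap_mul ε n).toLinearMap x y

theorem mul_neg : mul ε n x (-y) = -mul ε n x y := map_neg ((isBilinearMap_mul ε n).toLinearMap x) y

theorem sub_mul : mul ε n (x - y) z = mul ε n x z - mul ε n y z :=
  LinearMap.map_sub₂ (isBilinearMap_mul ε n).toLinearMap x y z

end Bilinear

theorem mul_one (x : CD n) : mul ε n x (one n) = x := by
  induction n with
  | zero => exact _root_.mul_one (show ℝ from x)
  | succ n ih =>
    refine Prod.ext ?_ ?_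
    · simp [ih, conj_zero, zero_mul]
    · simp [ih, conj_one, zero_mul]

theorem one_mul (x : CD n) : mul ε n (one n) x = x := by
  induction n with
  | zero => exact _root_.one_mul (show ℝ from x)
  | succ n ih =>
    refine Prod.ext ?_ ?_
    · simp [ih, mul_zero]
    · simp [mul_one, zero_mul]

theorem add_conj (x : CD n) : x + conj n x = (2 * re n x) • one n := by
  induction n with
  | zero => exact (two_mul (show ℝ from x)).symm.trans (_root_.mul_one _).symm
  | succ n ih => exact Prod.ext (ih x.1) (by simp [re])

theorem conj_mul_self (x : CD n) : mul ε n (conj n x) x = normSq ε n x • one n := by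
  induction n with
  | zero => exact (_root_.mul_one ((show ℝ from x) * (show ℝ from x))).symm
  | succ n ih =>
    refine Prod.ext ?_ ?_
    · simp [normSq, ih, mul_neg, add_smul, smul_smul]
    · simp [neg_mul]

theorem mul_self (x : CD n) :
    mul ε n x x = (-normSq ε n x) • one n + (2 * re n x) • x := by
  have hconj : conj n x = (2 * re n x) • one n - x := eq_sub_of_add_eq' (add_conj n x)
  have hnorm := conj_mul_self ε n x
  rw [hconj, sub_mul, smul_mul, one_mul] at hnorm
  rw [neg_smul, ← hnorm]
  abel

theorem mul_self_mul_comm (x : CD n) : mul ε n (mul ε n x x) x = mul ε n x (mul ε n x x) := by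
  rw [mul_self, add_mul, mul_add, smul_mul, smul_mul, mul_smul, mul_smul, one_mul, mul_one]

end CD

theorem stmt15_general (n : ℕ) (ε : ℕ → ℝ) :
    (∀ x : CD n, ∃ r s : ℝ, CD.mul ε n x x = r • CD.one n + s • x) ∧
    (∀ x : CD n, CD.mul ε n (CD.mul ε n x x) x
        = CD.mul ε n x (CD.mul ε n x x)) :=
  ⟨fun x => ⟨_, _, CD.mul_self ε n x⟩, CD.mul_self_mul_comm ε n⟩

/-- For any sign vector, every `x ∈ 𝔸ₙ` satisfies
`x·x = r·1 + s·x` for some reals `r, s`; consequently `(x·x)·x = x·(x·x)`. -/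
theorem stmt15 (n : ℕ) (ε : ℕ → ℝ) (hε : ∀ i, ε i = 1 ∨ ε i = -1) :
    (∀ x : CD n, ∃ r s : ℝ, CD.mul ε n x x = r • CD.one n + s • x) ∧
    (∀ x : CD n, CD.mul ε n (CD.mul ε n x x) x
        = CD.mul ε n x (CD.mul ε n x x)) :=
  stmt15_general n ε
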